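/- arXiv:2112.00299 — 3 statements merged into one kernel-verified Lean document; each statement's English description precedes it below -/
import Mathlib

section
/- (Proposition 1, correlated T&R phase-shift model.) Let T = β^T·exp(i·φ^T) and R = β^R·exp(i·φ^R) with β^T = √(1 − (β^R)²) and 0 < β^R < 1. Then (|T + R| = 1 or |T − R| = 1) holds if and only if there exist ν ∈ {0,1} and an integer k such that φ^R − φ^T = π/2 + ν·π + 2kπ, i.e., the phase difference between reflection and transmission is π/2 or 3π/2 modulo 2π. -/
open Real Complex

/-! `‖T ± R‖² = βT² + βR² ± 2 βT βR cos (φR − φT) = 1 ± 2 βT βR cos (φR − φT)`, so with both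
amplitudes nonzero either norm equals `1` exactly when `cos (φR − φT) = 0`, i.e. when the phase
difference is an odd multiple of `π / 2`. -/

theorem norm_sq_ofReal_mul_exp_add_ofReal_mul_exp (a b θ ψ : ℝ) :
    ‖(a : ℂ) * exp (I * θ) + (b : ℂ) * exp (I * ψ)‖ ^ 2
      = a ^ 2 + b ^ 2 + 2 * a * b * Real.cos (ψ - θ) := by
  rw [Complex.sq_norm, normSq_apply, mul_comm I, mul_comm I, Real.cos_sub]
  simp only [add_re, add_im, re_ofReal_mul, im_ofReal_mul, exp_ofReal_mul_I_re,
    exp_ofReal_mul_I_im]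
  linear_combination a ^ 2 * Real.sin_sq_add_cos_sq θ + b ^ 2 * Real.sin_sq_add_cos_sq ψ

theorem norm_sq_ofReal_mul_exp_sub_ofReal_mul_exp (a b θ ψ : ℝ) :
    ‖(a : ℂ) * exp (I * θ) - (b : ℂ) * exp (I * ψ)‖ ^ 2
      = a ^ 2 + b ^ 2 - 2 * a * b * Real.cos (ψ - θ) := by
  have h := norm_sq_ofReal_mul_exp_add_ofReal_mul_exp a (-b) θ ψ
  rw [ofReal_neg, neg_mul, ← sub_eq_add_neg] at h
  linear_combination h

theorem norm_ofReal_mul_exp_add_or_sub_eq_one_iff {a b : ℝ} (ha : a ≠ 0) (hb : b ≠ 0)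
    (hab : a ^ 2 + b ^ 2 = 1) (θ ψ : ℝ) :
    (‖(a : ℂ) * exp (I * θ) + (b : ℂ) * exp (I * ψ)‖ = 1 ∨
        ‖(a : ℂ) * exp (I * θ) - (b : ℂ) * exp (I * ψ)‖ = 1) ↔ Real.cos (ψ - θ) = 0 := by
  have hab0 : a * b ≠ 0 := mul_ne_zero ha hb
  rw [← pow_eq_one_iff_of_nonneg (norm_nonneg _) two_ne_zero,
    ← pow_eq_one_iff_of_nonneg (norm_nonneg _) two_ne_zero,
    norm_sq_ofReal_mul_exp_add_ofReal_mul_exp, norm_sq_ofReal_mul_exp_sub_ofReal_mul_exp, hab]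
  constructor
  · rintro (h | h)
    · exact (mul_eq_zero.mp (by linear_combination h / 2)).resolve_left hab0
    · exact (mul_eq_zero.mp (by linear_combination -h / 2)).resolve_left hab0
  · intro h
    left
    rw [h, mul_zero, add_zero]

theorem cos_eq_zero_iff_exists_pi_div_two_add (x : ℝ) :
    Real.cos x = 0 ↔
      ∃ (ν : ℕ) (k : ℤ), (ν = 0 ∨ ν = 1) ∧ x = π / 2 + (ν : ℝ) * π + 2 * (k : ℝ) * π := by
  rw [Real.cos_eq_zero_iff]
  constructor
  · rintro ⟨n, rfl⟩
    obtain ⟨k, rfl | rfl⟩ := Int.even_or_odd' n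
    · exact ⟨0, k, .inl rfl, by push_cast; ring⟩
    · exact ⟨1, k, .inr rfl, by push_cast; ring⟩
  · rintro ⟨ν, k, rfl | rfl, rfl⟩
    · exact ⟨2 * k, by push_cast; ring⟩
    · exact ⟨2 * k + 1, by push_cast; ring⟩

/-- Proposition 1, correlated T&R phase-shift model:
With `T = βT · exp(i φT)`, `R = βR · exp(i φR)`, `βT = √(1 − βR²)` and `0 < βR < 1`,
`(|T + R| = 1 ∨ |T − R| = 1)` holds iff there exist `ν ∈ {0,1}` and an integer `k` with
`φR − φT = π/2 + ν·π + 2kπ`. -/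
theorem stmt_1 (βR βT φT φR : ℝ)
    (hβR : 0 < βR ∧ βR < 1) (hβT : βT = Real.sqrt (1 - βR ^ 2))
    (T R : ℂ)
    (hT : T = (βT : ℂ) * Complex.exp (Complex.I * (φT : ℂ)))
    (hR : R = (βR : ℂ) * Complex.exp (Complex.I * (φR : ℂ))) :
    (‖T + R‖ = 1 ∨ ‖T - R‖ = 1)
      ↔ ∃ (ν : ℕ) (k : ℤ), (ν = 0 ∨ ν = 1) ∧
          φR - φT = π / 2 + (ν : ℝ) * π + 2 * (k : ℝ) * π := by
  obtain ⟨hβR_pos, hβR_lt_one⟩ := hβR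
  have hβR_sq : 0 < 1 - βR ^ 2 := by nlinarith
  have hβT_pos : 0 < βT := hβT ▸ Real.sqrt_pos.mpr hβR_sq
  have hsum : βT ^ 2 + βR ^ 2 = 1 := by rw [hβT, Real.sq_sqrt hβR_sq.le]; ring
  rw [hT, hR, norm_ofReal_mul_exp_add_or_sub_eq_one_iff hβT_pos.ne' hβR_pos.ne' hsum,
    cos_eq_zero_iff_exists_pi_div_two_add]
end

section
/- (Correctness of the diversity preserving phase-shift configuration, Table I.) Let Δ^R, Δ^T ∈ ℝ with d := Δ^R − Δ^T ∈ (−2π, 2π), and set φ' = (Δ^R + Δ^T)/2. Define (φ^{T*}, φ^{R*}) = (φ' − π/4, φ' + π/4) if d ∈ [0, π); (φ' − 3π/4, φ' + 3π/4) if d ∈ [π, 2π); (φ' + π/4, φ' − π/4) if d ∈ [−π, 0); and (φ' + 3π/4, φ' − 3π/4) if d ∈ (−2π, −π). Then: (a) φ^{R*} − φ^{T*} ∈ {π/2, 3π/2, −π/2, −3π/2}, so the correlated phase-shift constraint φ^{R*} − φ^{T*} ≡ π/2 + νπ (mod 2π) is satisfied for some ν ∈ {0,1}; (b) the phase errors are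 identical in magnitude, |φ^{R*} − Δ^R| = |φ^{T*} − Δ^T|; and (c) both phase errors satisfy |φ^{R*} − Δ^R| ≤ π/4 and |φ^{T*} − Δ^T| ≤ π/4. -/
open Real

/-!
Each row of Table I places the two phases symmetrically about the midpoint `φ' = (ΔR + ΔT)/2`,
as `φ' ± s` with `s ∈ {±π/4, ±3π/4}`. Both phase errors then equal `|ΔR - ΔT - 2s| / 2`, and
each row is chosen so that `2s` lies within `π/2` of `d = ΔR - ΔT`; the phase difference is `2s`,
an odd multiple of `π/2`.
-/

lemma abs_midpoint_add_sub_left (a b s : ℝ) : |(a + b) / 2 + s - a| = |a - b - 2 * s| / 2 := by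
  rw [← abs_neg, show -((a + b) / 2 + s - a) = (a - b - 2 * s) / 2 by ring, abs_div,
    abs_two]

lemma abs_midpoint_sub_sub_right (a b s : ℝ) : |(a + b) / 2 - s - b| = |a - b - 2 * s| / 2 := by
  rw [show (a + b) / 2 - s - b = (a - b - 2 * s) / 2 by ring, abs_div, abs_two]

lemma exists_eq_pi_div_two_add_mul_pi {x : ℝ}
    (hx : x = π / 2 ∨ x = 3 * π / 2 ∨ x = -(π / 2) ∨ x = -(3 * π / 2)) :
    ∃ (ν : ℕ) (k : ℤ), (ν = 0 ∨ ν = 1) ∧ x = π / 2 + (ν : ℝ) * π + 2 * (k : ℝ) * π := by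
  rcases hx with rfl | rfl | rfl | rfl
  · exact ⟨0, 0, Or.inl rfl, by push_cast; ring⟩
  · exact ⟨1, 0, Or.inr rfl, by push_cast; ring⟩
  · exact ⟨1, -1, Or.inr rfl, by push_cast; ring⟩
  · exact ⟨0, -1, Or.inl rfl, by push_cast; ring⟩

lemma exists_offset_of_table {d φ' φT φR : ℝ}
    (hcase :
      (0 ≤ d ∧ d < π ∧ φT = φ' - π / 4 ∧ φR = φ' + π / 4)
      ∨ (π ≤ d ∧ d < 2 * π ∧ φT = φ' - 3 * π / 4 ∧ φR = φ' + 3 * π / 4)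
      ∨ (-π ≤ d ∧ d < 0 ∧ φT = φ' + π / 4 ∧ φR = φ' - π / 4)
      ∨ (-(2 * π) < d ∧ d < -π ∧ φT = φ' + 3 * π / 4 ∧ φR = φ' - 3 * π / 4)) :
    ∃ s : ℝ, (2 * s = π / 2 ∨ 2 * s = 3 * π / 2 ∨ 2 * s = -(π / 2) ∨ 2 * s = -(3 * π / 2))
      ∧ φT = φ' - s ∧ φR = φ' + s ∧ |d - 2 * s| ≤ π / 2 := by
  have hπ := pi_pos
  rcases hcase with ⟨h₁, h₂, rfl, rfl⟩ | ⟨h₁, h₂, rfl, rfl⟩ | ⟨h₁, h₂, rfl, rfl⟩ | ⟨h₁, h₂, rfl, rfl⟩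
  · exact ⟨π / 4, by left; ring, rfl, rfl, abs_le.2 ⟨by linarith, by linarith⟩⟩
  · exact ⟨3 * π / 4, by right; left; ring, rfl, rfl, abs_le.2 ⟨by linarith, by linarith⟩⟩
  · exact ⟨-(π / 4), by right; right; left; ring, by ring, by ring,
      abs_le.2 ⟨by linarith, by linarith⟩⟩
  · exact ⟨-(3 * π / 4), by right; right; right; ring, by ring, by ring,
      abs_le.2 ⟨by linarith, by linarith⟩⟩

theorem stmt_4_general (ΔR ΔT φ' φT φR : ℝ)
    (hφ' : φ' = (ΔR + ΔT) / 2)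
    (hcase :
      (0 ≤ ΔR - ΔT ∧ ΔR - ΔT < π ∧ φT = φ' - π / 4 ∧ φR = φ' + π / 4)
      ∨ (π ≤ ΔR - ΔT ∧ ΔR - ΔT < 2 * π ∧ φT = φ' - 3 * π / 4 ∧ φR = φ' + 3 * π / 4)
      ∨ (-π ≤ ΔR - ΔT ∧ ΔR - ΔT < 0 ∧ φT = φ' + π / 4 ∧ φR = φ' - π / 4)
      ∨ (-(2 * π) < ΔR - ΔT ∧ ΔR - ΔT < -π ∧ φT = φ' + 3 * π / 4 ∧ φR = φ' - 3 * π / 4)) :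
    ((φR - φT = π / 2 ∨ φR - φT = 3 * π / 2 ∨ φR - φT = -(π / 2) ∨ φR - φT = -(3 * π / 2))
      ∧ (∃ (ν : ℕ) (k : ℤ), (ν = 0 ∨ ν = 1) ∧
          φR - φT = π / 2 + (ν : ℝ) * π + 2 * (k : ℝ) * π))
    ∧ |φR - ΔR| = |φT - ΔT|
    ∧ |φR - ΔR| ≤ π / 4 ∧ |φT - ΔT| ≤ π / 4 := by
  obtain ⟨s, hs, rfl, rfl, hbound⟩ := exists_offset_of_table hcase
  have hdiff : φ' + s - (φ' - s) = 2 * s := by ring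
  have herrR : |φ' + s - ΔR| = |ΔR - ΔT - 2 * s| / 2 := hφ' ▸ abs_midpoint_add_sub_left ΔR ΔT s
  have herrT : |φ' - s - ΔT| = |ΔR - ΔT - 2 * s| / 2 := hφ' ▸ abs_midpoint_sub_sub_right ΔR ΔT s
  rw [hdiff, herrR, herrT]
  exact ⟨⟨hs, exists_eq_pi_div_two_add_mul_pi hs⟩, rfl, by linarith, by linarith⟩

/-- Correctness of the diversity preserving phase-shift configuration,
Table I: with `d = ΔR − ΔT ∈ (−2π, 2π)`, `φ' = (ΔR + ΔT)/2` and the phases `φT, φR`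
chosen according to Table I, (a) `φR − φT ∈ {π/2, 3π/2, −π/2, −3π/2}`, so the correlated
phase-shift constraint `φR − φT = π/2 + νπ (mod 2π)` holds for some `ν ∈ {0,1}`;
(b) the two phase errors have equal magnitude; (c) both phase errors are at most `π/4`. -/
theorem stmt_4 (ΔR ΔT φ' φT φR : ℝ)
    (hd : -(2 * π) < ΔR - ΔT ∧ ΔR - ΔT < 2 * π)
    (hφ' : φ' = (ΔR + ΔT) / 2)
    (hcase :
      (0 ≤ ΔR - ΔT ∧ ΔR - ΔT < π ∧ φT = φ' - π / 4 ∧ φR = φ' + π / 4)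
      ∨ (π ≤ ΔR - ΔT ∧ ΔR - ΔT < 2 * π ∧ φT = φ' - 3 * π / 4 ∧ φR = φ' + 3 * π / 4)
      ∨ (-π ≤ ΔR - ΔT ∧ ΔR - ΔT < 0 ∧ φT = φ' + π / 4 ∧ φR = φ' - π / 4)
      ∨ (-(2 * π) < ΔR - ΔT ∧ ΔR - ΔT < -π ∧ φT = φ' + 3 * π / 4 ∧ φR = φ' - 3 * π / 4)) :
    ((φR - φT = π / 2 ∨ φR - φT = 3 * π / 2 ∨ φR - φT = -(π / 2) ∨ φR - φT = -(3 * π / 2))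
      ∧ (∃ (ν : ℕ) (k : ℤ), (ν = 0 ∨ ν = 1) ∧
          φR - φT = π / 2 + (ν : ℝ) * π + 2 * (k : ℝ) * π))
    ∧ |φR - ΔR| = |φT - ΔT|
    ∧ |φR - ΔR| ≤ π / 4 ∧ |φT - ΔT| ≤ π / 4 :=
  stmt_4_general ΔR ΔT φ' φT φR hφ' hcase
end

section
/- (Theorem 3, outage probability upper bound under DP-PSC.) Let (Ω, F, P) be a probability space and Z_0, Z_1, …, Z_M be mutually independent complex-valued random variables such that almost surely Re(Z_p · conj(Z_q)) ≥ 0 for all pairs of indices p, q ∈ {0,1,…,M}. Then for every t > 0, P(|Z_0 + Z_1 + ⋯ + Z_M| < t) ≤ ∏_{m=0}^{M} P(|Z_m| < t). -/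
open MeasureTheory ProbabilityTheory Complex Finset

/-!
If the summands pairwise have nonnegative real inner product, then expanding `‖∑ x‖²` as the
double sum `∑ p q, ⟪x p, x q⟫` shows that every summand is at most as long as the sum. Hence
`‖∑ Z m‖ < t` forces `‖Z m‖ < t` for every `m` almost surely, and independence turns the
probability of that intersection into the product.
-/

open scoped RealInnerProductSpace

theorem norm_le_norm_sum_of_inner_nonneg {ι E : Type*} [NormedAddCommGroup E]
    [InnerProductSpace ℝ E] {s : Finset ι} {x : ι → E}
    (h : ∀ p ∈ s, ∀ q ∈ s, 0 ≤ ⟪x p, x q⟫) {i : ι} (hi : i ∈ s) :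
    ‖x i‖ ≤ ‖∑ j ∈ s, x j‖ := by
  have hrow : ∀ p ∈ s, 0 ≤ ∑ q ∈ s, ⟪x p, x q⟫ := fun p hp => sum_nonneg (h p hp)
  suffices ‖x i‖ ^ 2 ≤ ‖∑ j ∈ s, x j‖ ^ 2 from
    (abs_le_of_sq_le_sq' this (norm_nonneg _)).2
  calc ‖x i‖ ^ 2 = ⟪x i, x i⟫ := (real_inner_self_eq_norm_sq _).symm
    _ ≤ ∑ q ∈ s, ⟪x i, x q⟫ := single_le_sum (h i hi) hi
    _ ≤ ∑ p ∈ s, ∑ q ∈ s, ⟪x p, x q⟫ := single_le_sum hrow hi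
    _ = ‖∑ j ∈ s, x j‖ ^ 2 := by
      rw [← real_inner_self_eq_norm_sq, sum_inner]
      simp only [inner_sum]

theorem measure_norm_sum_lt_le_prod {Ω ι E : Type*} [MeasurableSpace Ω] {μ : Measure Ω}
    [Fintype ι] [NormedAddCommGroup E] [InnerProductSpace ℝ E] [MeasurableSpace E]
    [OpensMeasurableSpace E] {Z : ι → Ω → E} (hindep : iIndepFun Z μ)
    (hpos : ∀ᵐ ω ∂μ, ∀ p q, 0 ≤ ⟪Z p ω, Z q ω⟫) (t : ℝ) :
    μ {ω | ‖∑ m, Z m ω‖ < t} ≤ ∏ m, μ {ω | ‖Z m ω‖ < t} := by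
  have hsub : ∀ᵐ ω ∂μ, ‖∑ m, Z m ω‖ < t → ω ∈ ⋂ m, Z m ⁻¹' Metric.ball 0 t := by
    filter_upwards [hpos] with ω hω hsum
    simp only [Set.mem_iInter, Set.mem_preimage, mem_ball_zero_iff]
    exact fun m =>
      (norm_le_norm_sum_of_inner_nonneg (fun p _ q _ => hω p q) (mem_univ m)).trans_lt hsum
  calc μ {ω | ‖∑ m, Z m ω‖ < t} ≤ μ (⋂ m, Z m ⁻¹' Metric.ball 0 t) :=
      measure_mono_ae hsub
    _ = ∏ m, μ (Z m ⁻¹' Metric.ball 0 t) :=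
      hindep.meas_iInter fun m => ⟨_, Metric.isOpen_ball.measurableSet, rfl⟩
    _ = ∏ m, μ {ω | ‖Z m ω‖ < t} := by simp only [Set.preimage, mem_ball_zero_iff]

theorem stmt_7_general {Ω : Type*} [MeasurableSpace Ω] (μ : Measure Ω)
    (M : ℕ) (Z : Fin (M + 1) → Ω → ℂ)
    (hindep : iIndepFun Z μ)
    (hpos : ∀ᵐ ω ∂μ, ∀ p q : Fin (M + 1), 0 ≤ (Z p ω * (starRingEnd ℂ) (Z q ω)).re) :
    ∀ t : ℝ, 0 < t →
      μ {ω | ‖∑ m, Z m ω‖ < t} ≤ ∏ m, μ {ω | ‖Z m ω‖ < t} := by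
  refine fun t _ => measure_norm_sum_lt_le_prod hindep ?_ t
  filter_upwards [hpos] with ω hω p q
  rw [Complex.inner]
  exact hω q p

/-- Theorem 3, outage probability upper bound under DP-PSC: if
`Z 0, …, Z M` are mutually independent complex random variables whose pairwise real
inner products are almost surely nonnegative, then for every `t > 0`,
`P(|Z 0 + ⋯ + Z M| < t) ≤ ∏ m, P(|Z m| < t)`. -/
theorem stmt_7 {Ω : Type*} [MeasurableSpace Ω] (μ : Measure Ω) [IsProbabilityMeasure μ]
    (M : ℕ) (Z : Fin (M + 1) → Ω → ℂ)
    (hmeas : ∀ m, Measurable (Z m))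
    (hindep : iIndepFun Z μ)
    (hpos : ∀ᵐ ω ∂μ, ∀ p q : Fin (M + 1), 0 ≤ (Z p ω * (starRingEnd ℂ) (Z q ω)).re) :
    ∀ t : ℝ, 0 < t →
      μ {ω | ‖∑ m, Z m ω‖ < t} ≤ ∏ m, μ {ω | ‖Z m ω‖ < t} :=
  stmt_7_general μ M Z hindep hpos
end
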